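/- arXiv:1802.08229 — 2 statements merged into one kernel-verified Lean document; each statement's English description precedes it below -/
import Mathlib

section
/- For fixed α ∈ (0, 1), the upper α/2 quantile of the standard t-distribution is strictly decreasing in the degrees of freedom: if 1 ≤ d₁ < d₂ then t_{d₂, α/2} < t_{d₁, α/2}. -/
/-!
For `d₁ < d₂` the two densities cross exactly once on `(0, ∞)`. In `u = x ^ 2` the difference
of the log-densities has derivative of the sign of `u - 1` and tends to `+∞`; it is negative at
`u = 0` because the normalising constant of `t_d`, which is
`(2π Γ(d/2) Γ(d/2 + 1) / Γ(d/2 + 1/2) ^ 2) ^ (-1/2)`, increases with `d`: by Euler's limit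
formula that Gamma ratio is the product of `(v + 1/2) ^ 2 / (v (v + 1))` over `v = d/2 + j`,
and these factors decrease in `v`. As both densities put mass `1/2` on `(0, ∞)`, the single
crossing from below makes every tail `P(T_{d₁} > t)`, `t > 0`, larger than `P(T_{d₂} > t)`.
Tail mass `α/2 < 1/2` forces positive quantiles, and then equal tail masses force `t₂ < t₁`.
-/

open MeasureTheory Set

/-- Density of the standard t-distribution with `d` degrees of freedom. -/
noncomputable def stdTPdf (d : ℝ) (x : ℝ) : ℝ :=
  Real.Gamma ((d + 1) / 2) / (Real.sqrt (d * Real.pi) * Real.Gamma (d / 2))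
    * (1 + x ^ 2 / d) ^ (-((d + 1) / 2))

/-- The standard t-distribution with `d` degrees of freedom as a measure on `ℝ`. -/
noncomputable def stdT (d : ℝ) : Measure ℝ :=
  (volume : Measure ℝ).withDensity fun x => ENNReal.ofReal (stdTPdf d x)

open Filter Real
open scoped Topology

lemma lintegral_rpow_mul_exp_neg_mul_Ioi {a r : ℝ} (ha : 0 < a) (hr : 0 < r) :
    ∫⁻ t in Ioi 0, ENNReal.ofReal (t ^ (a - 1) * exp (-(r * t))) =
      ENNReal.ofReal (r ^ (-a) * Gamma a) := by
  have hint : IntegrableOn (fun t : ℝ => t ^ (a - 1) * exp (-(r * t))) (Ioi 0) :=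
    (integrableOn_rpow_mul_exp_neg_mul_rpow (s := a - 1) (by linarith) one_pos hr).congr_fun
      (fun t _ => by simp only [rpow_one, neg_mul]) measurableSet_Ioi
  have hnonneg : 0 ≤ᵐ[volume.restrict (Ioi 0)] fun t : ℝ => t ^ (a - 1) * exp (-(r * t)) := by
    filter_upwards [ae_restrict_mem measurableSet_Ioi] with t (ht : 0 < t)
    positivity
  rw [← ofReal_integral_eq_lintegral_ofReal hint hnonneg, integral_rpow_mul_exp_neg_mul_Ioi ha hr,
    one_div, inv_rpow hr.le, ← rpow_neg hr.le]

lemma lintegral_exp_neg_mul_sq {b : ℝ} (hb : 0 < b) :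
    ∫⁻ x, ENNReal.ofReal (exp (-b * x ^ 2)) = ENNReal.ofReal √(π / b) := by
  rw [← ofReal_integral_eq_lintegral_ofReal (integrable_exp_neg_mul_sq hb)
    (ae_of_all _ fun x => (exp_pos _).le), integral_gaussian]

lemma lintegral_one_add_sq_div_rpow_neg {d p : ℝ} (hd : 0 < d) (hp : 1 / 2 < p) :
    ∫⁻ x, ENNReal.ofReal ((1 + x ^ 2 / d) ^ (-p)) =
      ENNReal.ofReal (√(d * π) * Gamma (p - 1 / 2) / Gamma p) := by
  have hΓ : 0 < Gamma p := Gamma_pos_of_pos (by linarith)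
  set F : ℝ → ℝ → ENNReal := fun x t =>
    ENNReal.ofReal (t ^ (p - 1) * exp (-(1 * t))) * ENNReal.ofReal (exp (-(t / d) * x ^ 2))
  -- `a ^ (-p)` is a Gamma integral in `t`; for `a = 1 + x ^ 2 / d` its integrand is Gaussian in `x`
  have hrepr : ∀ x, ENNReal.ofReal ((1 + x ^ 2 / d) ^ (-p)) =
      ENNReal.ofReal (Gamma p)⁻¹ * ∫⁻ t in Ioi 0, F x t := by
    intro x
    have hF : ∀ t, F x t = ENNReal.ofReal (t ^ (p - 1) * exp (-((1 + x ^ 2 / d) * t))) := by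
      intro t
      simp only [F]
      rw [← ENNReal.ofReal_mul' (exp_pos _).le, mul_assoc, ← exp_add]
      ring_nf
    simp_rw [hF]
    rw [lintegral_rpow_mul_exp_neg_mul_Ioi (by linarith) (by positivity),
      ← ENNReal.ofReal_mul (by positivity)]
    congr 1
    field_simp
  have hgauss : ∀ t ∈ Ioi (0 : ℝ), ∫⁻ x, F x t =
      ENNReal.ofReal √(d * π) * ENNReal.ofReal (t ^ (p - 1 / 2 - 1) * exp (-(1 * t))) := by
    intro t (ht : 0 < t)
    rw [lintegral_const_mul' _ _ ENNReal.ofReal_ne_top, lintegral_exp_neg_mul_sq (by positivity),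
      ← ENNReal.ofReal_mul (by positivity), ← ENNReal.ofReal_mul (by positivity)]
    congr 1
    have h1 : √(π / (t / d)) = √(d * π) * t ^ (-(1 / 2 : ℝ)) := by
      rw [show π / (t / d) = d * π / t by field_simp, sqrt_div' _ ht.le, sqrt_eq_rpow t,
        rpow_neg ht.le]
      ring
    rw [h1, show p - 1 / 2 - 1 = (p - 1) + -(1 / 2) by ring, rpow_add ht]
    ring
  calc ∫⁻ x, ENNReal.ofReal ((1 + x ^ 2 / d) ^ (-p))
      = ENNReal.ofReal (Gamma p)⁻¹ * ∫⁻ x, ∫⁻ t in Ioi 0, F x t := by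
        simp_rw [hrepr]
        exact lintegral_const_mul' _ _ ENNReal.ofReal_ne_top
    _ = ENNReal.ofReal (Gamma p)⁻¹ * ∫⁻ t in Ioi 0, ∫⁻ x, F x t := by
        rw [lintegral_lintegral_swap (by fun_prop)]
    _ = ENNReal.ofReal (Gamma p)⁻¹ *
          (ENNReal.ofReal √(d * π) *
            ENNReal.ofReal (1 ^ (-(p - 1 / 2)) * Gamma (p - 1 / 2))) := by
        rw [setLIntegral_congr_fun measurableSet_Ioi hgauss,
          lintegral_const_mul' _ _ ENNReal.ofReal_ne_top,
          lintegral_rpow_mul_exp_neg_mul_Ioi (by linarith) one_pos]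
    _ = ENNReal.ofReal (√(d * π) * Gamma (p - 1 / 2) / Gamma p) := by
        rw [← ENNReal.ofReal_mul (by positivity), ← ENNReal.ofReal_mul (by positivity)]
        congr 1
        rw [one_rpow]
        ring

lemma setIntegral_Ioi_zero_of_even {f : ℝ → ℝ} (hf : Integrable f)
    (heven : ∀ x, f (-x) = f x) :
    ∫ x in Ioi 0, f x = (∫ x, f x) / 2 := by
  have hIic : ∫ x in Iic 0, f x = ∫ x in Ioi 0, f x := by
    rw [← neg_zero, ← integral_comp_neg_Ioi]
    simp_rw [heven, neg_zero]
  have := intervalIntegral.integral_Iic_add_Ioi (b := 0) hf.integrableOn hf.integrableOn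
  linarith

lemma setIntegral_pos_of_forall_pos {X : Type*} [MeasurableSpace X] {μ : Measure X} {f : X → ℝ}
    {s : Set X} (hs : MeasurableSet s) (hμs : μ s ≠ 0) (hf : IntegrableOn f s μ)
    (hpos : ∀ x ∈ s, 0 < f x) : 0 < ∫ x in s, f x ∂μ := by
  rw [setIntegral_pos_iff_support_of_nonneg_ae
    (ae_restrict_of_forall_mem hs fun x hx => (hpos x hx).le) hf]
  exact hμs.bot_lt.trans_le (measure_mono fun x hx => ⟨(hpos x hx).ne', hx⟩)

lemma setIntegral_Ioi_lt_of_crossing {f g : ℝ → ℝ} (hf : IntegrableOn f (Ioi 0))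
    (hg : IntegrableOn g (Ioi 0)) (hfg : ∫ x in Ioi 0, f x = ∫ x in Ioi 0, g x) {b : ℝ}
    (hlt : ∀ x ∈ Ioo 0 b, f x < g x) (hgt : ∀ x ∈ Ioi b, g x < f x) {t : ℝ} (ht : 0 < t) :
    ∫ x in Ioi t, g x < ∫ x in Ioi t, f x := by
  have hsub : Ioi t ⊆ Ioi 0 := Ioi_subset_Ioi ht.le
  rw [← sub_pos, ← integral_sub (hf.mono_set hsub) (hg.mono_set hsub)]
  rcases le_or_gt b t with hbt | htb
  · exact setIntegral_pos_of_forall_pos measurableSet_Ioi (by simp)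
      ((hf.sub hg).mono_set hsub) fun x hx => sub_pos.2 (hgt x (hbt.trans_lt hx))
  · have hIoc : 0 < ∫ x in Ioc 0 t, (g x - f x) :=
      setIntegral_pos_of_forall_pos measurableSet_Ioc (by simp [ht])
        ((hg.sub hf).mono_set Ioc_subset_Ioi_self) fun x hx =>
          sub_pos.2 (hlt x ⟨hx.1, hx.2.trans_lt htb⟩)
    have hsplit : ∫ x in Ioi 0, (f x - g x) =
        (∫ x in Ioc 0 t, (f x - g x)) + ∫ x in Ioi t, (f x - g x) := by
      rw [← Ioc_union_Ioi_eq_Ioi ht.le]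
      exact setIntegral_union (Ioc_disjoint_Ioi le_rfl) measurableSet_Ioi
        ((hf.sub hg).mono_set Ioc_subset_Ioi_self) ((hf.sub hg).mono_set hsub)
    have hneg : ∫ x in Ioc 0 t, (f x - g x) = -∫ x in Ioc 0 t, (g x - f x) := by
      rw [← integral_neg]
      simp_rw [neg_sub]
    rw [integral_sub hf hg, hfg, sub_self, hneg] at hsplit
    linarith

lemma exists_crossing_of_antitoneOn_of_strictMonoOn {f : ℝ → ℝ} {a : ℝ} (ha : 0 ≤ a)
    (hanti : AntitoneOn f (Icc 0 a)) (hmono : StrictMonoOn f (Ici a))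
    (hcont : ContinuousOn f (Ici a)) (h₀ : f 0 < 0) (htop : Tendsto f atTop atTop) :
    ∃ c, (∀ u ∈ Ico 0 c, f u < 0) ∧ ∀ u ∈ Ioi c, 0 < f u := by
  have hfa : f a < 0 :=
    (hanti ⟨le_rfl, ha⟩ ⟨ha, le_rfl⟩ ha).trans_lt h₀
  obtain ⟨v, hav, hv⟩ := ((htop.eventually_gt_atTop 0).and (eventually_ge_atTop a)).exists
  obtain ⟨c, hc, hfc⟩ :=
    intermediate_value_Icc hv (hcont.mono Icc_subset_Ici_self) ⟨hfa.le, hav.le⟩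
  refine ⟨c, fun u hu => ?_, fun u hu => ?_⟩
  · rcases le_or_gt u a with hua | hau
    · exact (hanti ⟨le_rfl, ha⟩ ⟨hu.1, hua⟩ hu.1).trans_lt h₀
    · exact hfc ▸ hmono hau.le hc.1 hu.2
  · exact hfc ▸ hmono hc.1 (hc.1.trans hu.le) hu

noncomputable def gammaRatioFactor (v : ℝ) : ℝ := (v + 1 / 2) ^ 2 / (v * (v + 1))

noncomputable def gammaRatio (u : ℝ) : ℝ := Gamma u * Gamma (u + 1) / Gamma (u + 1 / 2) ^ 2

lemma gammaRatioFactor_pos {v : ℝ} (hv : 0 < v) : 0 < gammaRatioFactor v := by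
  unfold gammaRatioFactor; positivity

lemma gammaRatio_pos {u : ℝ} (hu : 0 < u) : 0 < gammaRatio u := by
  have := Gamma_pos_of_pos hu
  have := Gamma_pos_of_pos (show 0 < u + 1 by linarith)
  have := Gamma_pos_of_pos (show 0 < u + 1 / 2 by linarith)
  unfold gammaRatio
  positivity

lemma gammaRatioFactor_strictAntiOn : StrictAntiOn gammaRatioFactor (Ioi 0) := by
  intro s (hs : 0 < s) t (ht : 0 < t) hst
  rw [gammaRatioFactor, gammaRatioFactor, div_lt_div_iff₀ (by positivity) (by positivity)]
  nlinarith [mul_pos hs ht, mul_pos (mul_pos hs ht) (sub_pos.2 hst)]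

lemma GammaSeq_mul_GammaSeq_add_one_div_sq {u : ℝ} (hu : 0 < u) {n : ℕ} (hn : n ≠ 0) :
    GammaSeq u n * GammaSeq (u + 1) n / GammaSeq (u + 1 / 2) n ^ 2 =
      ∏ j ∈ Finset.range (n + 1), gammaRatioFactor (u + j) := by
  have hN : (0 : ℝ) < n := by positivity
  have hprod : ∀ c : ℝ, 0 < c → ∏ j ∈ Finset.range (n + 1), (c + j) ≠ 0 := fun c hc =>
    (Finset.prod_pos fun j _ => by positivity).ne'
  have hpow : ((n : ℝ) ^ (u + 1 / 2)) ^ 2 = (n : ℝ) ^ u * (n : ℝ) ^ (u + 1) := by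
    rw [sq, ← rpow_add hN, ← rpow_add hN]
    ring_nf
  have hfac : ∏ j ∈ Finset.range (n + 1), gammaRatioFactor (u + j) =
      (∏ j ∈ Finset.range (n + 1), (u + 1 / 2 + j)) ^ 2 /
        ((∏ j ∈ Finset.range (n + 1), (u + j)) *
          ∏ j ∈ Finset.range (n + 1), (u + 1 + j)) := by
    simp only [gammaRatioFactor, Finset.prod_div_distrib, Finset.prod_pow, Finset.prod_mul_distrib,
      add_right_comm _ (1 / 2 : ℝ), add_right_comm _ (1 : ℝ)]
  rw [hfac, GammaSeq, GammaSeq, GammaSeq, div_pow, mul_pow, hpow]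
  have h₀ := hprod u hu
  have h₁ := hprod (u + 1) (by linarith)
  have h₂ := hprod (u + 1 / 2) (by linarith)
  field_simp

lemma tendsto_prod_gammaRatioFactor {u : ℝ} (hu : 0 < u) :
    Tendsto (fun n => ∏ j ∈ Finset.range (n + 1), gammaRatioFactor (u + j)) atTop
      (𝓝 (gammaRatio u)) := by
  have hΓ : Gamma (u + 1 / 2) ^ 2 ≠ 0 := (pow_pos (Gamma_pos_of_pos (by linarith)) 2).ne'
  refine (((GammaSeq_tendsto_Gamma u).mul (GammaSeq_tendsto_Gamma (u + 1))).div
    ((GammaSeq_tendsto_Gamma (u + 1 / 2)).pow 2) hΓ).congr' ?_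
  filter_upwards [eventually_ne_atTop 0] with n hn
  exact GammaSeq_mul_GammaSeq_add_one_div_sq hu hn

lemma gammaRatio_antitoneOn : AntitoneOn gammaRatio (Ioi 0) := by
  intro s (hs : 0 < s) t (ht : 0 < t) hst
  refine le_of_tendsto_of_tendsto' (tendsto_prod_gammaRatioFactor ht)
    (tendsto_prod_gammaRatioFactor hs) fun n => Finset.prod_le_prod
      (fun j _ => (gammaRatioFactor_pos (by positivity)).le) fun j _ => ?_
  exact gammaRatioFactor_strictAntiOn.antitoneOn (by simp only [mem_Ioi]; positivity)
    (by simp only [mem_Ioi]; positivity) (by linarith)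

lemma gammaRatio_eq_mul_gammaRatio_add_one {u : ℝ} (hu : 0 < u) :
    gammaRatio u = gammaRatioFactor u * gammaRatio (u + 1) := by
  have hΓ := Gamma_pos_of_pos hu
  have hΓ' := Gamma_pos_of_pos (show 0 < u + 1 / 2 by linarith)
  rw [gammaRatio, gammaRatio, gammaRatioFactor, show u + 1 + 1 / 2 = u + 1 / 2 + 1 by ring,
    Gamma_add_one (s := u + 1 / 2) (by positivity), Gamma_add_one (s := u + 1) (by positivity),
    Gamma_add_one hu.ne']
  field_simp

lemma gammaRatio_strictAntiOn : StrictAntiOn gammaRatio (Ioi 0) := by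
  intro s (hs : 0 < s) t (ht : 0 < t) hst
  have hR := gammaRatio_pos (show 0 < s + 1 by linarith)
  calc gammaRatio t = gammaRatioFactor t * gammaRatio (t + 1) :=
        gammaRatio_eq_mul_gammaRatio_add_one ht
    _ ≤ gammaRatioFactor t * gammaRatio (s + 1) := by
        gcongr
        · exact (gammaRatioFactor_pos ht).le
        · exact gammaRatio_antitoneOn (by simp only [mem_Ioi]; linarith)
            (by simp only [mem_Ioi]; linarith) (by linarith)
    _ < gammaRatioFactor s * gammaRatio (s + 1) := by
        gcongr
        exact gammaRatioFactor_strictAntiOn hs ht hst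
    _ = gammaRatio s := (gammaRatio_eq_mul_gammaRatio_add_one hs).symm

noncomputable def stdTNormConst (d : ℝ) : ℝ :=
  Gamma ((d + 1) / 2) / (√(d * π) * Gamma (d / 2))

section StdT

variable {d : ℝ}

lemma stdTPdf_eq (d x : ℝ) :
    stdTPdf d x = stdTNormConst d * (1 + x ^ 2 / d) ^ (-((d + 1) / 2)) := rfl

lemma stdTNormConst_pos (hd : 0 < d) : 0 < stdTNormConst d := by
  have := Gamma_pos_of_pos (show 0 < (d + 1) / 2 by linarith)
  have := Gamma_pos_of_pos (show 0 < d / 2 by linarith)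
  unfold stdTNormConst
  positivity

lemma stdTNormConst_sq (hd : 0 < d) : stdTNormConst d ^ 2 = (2 * π * gammaRatio (d / 2))⁻¹ := by
  have := Gamma_pos_of_pos (show 0 < d / 2 by linarith)
  have := Gamma_pos_of_pos (show 0 < d / 2 + 1 / 2 by linarith)
  rw [stdTNormConst, gammaRatio, div_pow, mul_pow, sq_sqrt (by positivity),
    Gamma_add_one (by positivity), show (d + 1) / 2 = d / 2 + 1 / 2 by ring]
  field_simp

lemma stdTNormConst_strictMonoOn : StrictMonoOn stdTNormConst (Ioi 0) := by
  intro d₁ (h₁ : 0 < d₁) d₂ (h₂ : 0 < d₂) hd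
  have hR := gammaRatio_strictAntiOn (half_pos h₁) (half_pos h₂) (by linarith)
  have hR₂ := gammaRatio_pos (half_pos h₂)
  rw [← pow_lt_pow_iff_left₀ (stdTNormConst_pos h₁).le (stdTNormConst_pos h₂).le
    two_ne_zero, stdTNormConst_sq h₁, stdTNormConst_sq h₂]
  gcongr

lemma stdTPdf_pos (hd : 0 < d) (x : ℝ) : 0 < stdTPdf d x :=
  mul_pos (stdTNormConst_pos hd) (rpow_pos_of_pos (by positivity) _)

lemma stdTPdf_neg (d x : ℝ) : stdTPdf d (-x) = stdTPdf d x := by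
  simp only [stdTPdf, neg_sq]

lemma continuous_stdTPdf (hd : 0 < d) : Continuous (stdTPdf d) :=
  continuous_const.mul <| (by fun_prop : Continuous fun x : ℝ => 1 + x ^ 2 / d).rpow_const
    fun x => Or.inl (by positivity)

lemma lintegral_stdTPdf (hd : 0 < d) : ∫⁻ x, ENNReal.ofReal (stdTPdf d x) = 1 := by
  have := Gamma_pos_of_pos (show 0 < (d + 1) / 2 by linarith)
  have := Gamma_pos_of_pos (show 0 < d / 2 by linarith)
  simp_rw [stdTPdf_eq, ENNReal.ofReal_mul (stdTNormConst_pos hd).le]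
  rw [lintegral_const_mul' _ _ ENNReal.ofReal_ne_top,
    lintegral_one_add_sq_div_rpow_neg hd (by linarith),
    ← ENNReal.ofReal_mul (stdTNormConst_pos hd).le,
    show (d + 1) / 2 - 1 / 2 = d / 2 by ring, stdTNormConst, ENNReal.ofReal_eq_one]
  field_simp

lemma integrable_stdTPdf (hd : 0 < d) : Integrable (stdTPdf d) := by
  refine ⟨(continuous_stdTPdf hd).aestronglyMeasurable, ?_⟩
  rw [hasFiniteIntegral_iff_ofReal (ae_of_all _ fun x => (stdTPdf_pos hd x).le),
    lintegral_stdTPdf hd]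
  exact ENNReal.one_lt_top

lemma integral_stdTPdf (hd : 0 < d) : ∫ x, stdTPdf d x = 1 := by
  rw [integral_eq_lintegral_of_nonneg_ae (ae_of_all _ fun x => (stdTPdf_pos hd x).le)
    (continuous_stdTPdf hd).aestronglyMeasurable, lintegral_stdTPdf hd, ENNReal.toReal_one]

lemma setIntegral_Ioi_zero_stdTPdf (hd : 0 < d) : ∫ x in Ioi 0, stdTPdf d x = 1 / 2 := by
  rw [setIntegral_Ioi_zero_of_even (integrable_stdTPdf hd) (stdTPdf_neg d), integral_stdTPdf hd]

lemma stdT_apply (hd : 0 < d) {s : Set ℝ} (hs : MeasurableSet s) :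
    stdT d s = ENNReal.ofReal (∫ x in s, stdTPdf d x) := by
  rw [stdT, withDensity_apply _ hs, ofReal_integral_eq_lintegral_ofReal
    (integrable_stdTPdf hd).integrableOn (ae_of_all _ fun x => (stdTPdf_pos hd x).le)]

lemma stdT_Ioi_zero (hd : 0 < d) : stdT d (Ioi 0) = ENNReal.ofReal (1 / 2) := by
  rw [stdT_apply hd measurableSet_Ioi, setIntegral_Ioi_zero_stdTPdf hd]

end StdT

section Crossing

variable {d₁ d₂ : ℝ}

noncomputable def logStdTPdfOfSq (d u : ℝ) : ℝ :=
  log (stdTNormConst d) - (d + 1) / 2 * log (1 + u / d)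

lemma stdTPdf_eq_exp {d : ℝ} (hd : 0 < d) (x : ℝ) :
    stdTPdf d x = exp (logStdTPdfOfSq d (x ^ 2)) := by
  rw [logStdTPdfOfSq, exp_sub, exp_log (stdTNormConst_pos hd), stdTPdf_eq,
    rpow_def_of_pos (by positivity), div_eq_mul_inv (stdTNormConst d), ← exp_neg]
  congr 2
  ring

lemma hasDerivAt_logStdTPdfOfSq {d u : ℝ} (hd : 0 < d) (hdu : 0 < d + u) :
    HasDerivAt (logStdTPdfOfSq d) (-((d + 1) / (2 * (d + u)))) u := by
  have hbase : HasDerivAt (fun v => 1 + v / d) (1 / d) u :=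
    ((hasDerivAt_id u).div_const d).const_add 1
  have hpos : 0 < 1 + u / d := by rw [one_add_div hd.ne']; exact div_pos hdu hd
  exact (((hbase.log hpos.ne').const_mul ((d + 1) / 2)).const_sub
    (log (stdTNormConst d))).congr_deriv (by field_simp)

lemma hasDerivAt_logStdTPdfOfSq_sub (hd₁ : 0 < d₁) (hd₂ : 0 < d₂) {u : ℝ} (hu : 0 ≤ u) :
    HasDerivAt (logStdTPdfOfSq d₁ - logStdTPdfOfSq d₂)
      ((d₂ - d₁) * (u - 1) / (2 * ((d₁ + u) * (d₂ + u)))) u := by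
  have h₁ : 0 < d₁ + u := by linarith
  have h₂ : 0 < d₂ + u := by linarith
  exact ((hasDerivAt_logStdTPdfOfSq hd₁ h₁).sub
    (hasDerivAt_logStdTPdfOfSq hd₂ h₂)).congr_deriv (by field_simp; ring)

lemma continuousOn_logStdTPdfOfSq_sub (hd₁ : 0 < d₁) (hd₂ : 0 < d₂) :
    ContinuousOn (logStdTPdfOfSq d₁ - logStdTPdfOfSq d₂) (Ici 0) := fun _ hu =>
  (hasDerivAt_logStdTPdfOfSq_sub hd₁ hd₂ hu).continuousAt.continuousWithinAt

lemma antitoneOn_logStdTPdfOfSq_sub (hd₁ : 0 < d₁) (hd : d₁ ≤ d₂) :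
    AntitoneOn (logStdTPdfOfSq d₁ - logStdTPdfOfSq d₂) (Icc 0 1) := by
  have hd₂ : 0 < d₂ := hd₁.trans_le hd
  refine antitoneOn_of_hasDerivWithinAt_nonpos (convex_Icc 0 1)
    ((continuousOn_logStdTPdfOfSq_sub hd₁ hd₂).mono Icc_subset_Ici_self)
    (fun u hu =>
      (hasDerivAt_logStdTPdfOfSq_sub hd₁ hd₂ (interior_subset hu).1).hasDerivWithinAt)
    fun u hu => ?_
  rw [interior_Icc] at hu
  have : 0 < d₁ + u := by linarith [hu.1]
  have : 0 < d₂ + u := by linarith [hu.1]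
  exact div_nonpos_of_nonpos_of_nonneg
    (mul_nonpos_of_nonneg_of_nonpos (by linarith) (by linarith [hu.2])) (by positivity)

lemma strictMonoOn_logStdTPdfOfSq_sub (hd₁ : 0 < d₁) (hd : d₁ < d₂) :
    StrictMonoOn (logStdTPdfOfSq d₁ - logStdTPdfOfSq d₂) (Ici 1) := by
  have hd₂ : 0 < d₂ := hd₁.trans hd
  refine strictMonoOn_of_hasDerivWithinAt_pos (convex_Ici 1)
    ((continuousOn_logStdTPdfOfSq_sub hd₁ hd₂).mono (Ici_subset_Ici.2 zero_le_one))
    (fun u hu => (hasDerivAt_logStdTPdfOfSq_sub hd₁ hd₂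
      (zero_le_one.trans (interior_subset hu))).hasDerivWithinAt) fun u hu => ?_
  rw [interior_Ici] at hu
  have : 0 < u - 1 := sub_pos.2 hu
  have : 0 < d₂ - d₁ := sub_pos.2 hd
  have : 0 < d₁ + u := by linarith [show 1 < u from hu]
  have : 0 < d₂ + u := by linarith [show 1 < u from hu]
  positivity

lemma logStdTPdfOfSq_zero_lt (hd₁ : 0 < d₁) (hd : d₁ < d₂) :
    logStdTPdfOfSq d₁ 0 < logStdTPdfOfSq d₂ 0 := by
  simp only [logStdTPdfOfSq, zero_div, add_zero, log_one, mul_zero, sub_zero]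
  exact log_lt_log (stdTNormConst_pos hd₁) (stdTNormConst_strictMonoOn hd₁ (hd₁.trans hd) hd)

lemma tendsto_logStdTPdfOfSq_sub (hd₁ : 0 < d₁) (hd : d₁ < d₂) :
    Tendsto (logStdTPdfOfSq d₁ - logStdTPdfOfSq d₂) atTop atTop := by
  have hd₂ : 0 < d₂ := hd₁.trans hd
  have hlog : ∀ u, 0 ≤ u → log (1 + u / d₁) ≤ log (d₂ / d₁) + log (1 + u / d₂) := by
    intro u hu
    rw [← log_mul (by positivity) (by positivity)]
    gcongr
    rw [show d₂ / d₁ * (1 + u / d₂) = 1 + u / d₁ + (d₂ - d₁) / d₁ by field_simp; ring]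
    have : 0 ≤ (d₂ - d₁) / d₁ := div_nonneg (by linarith) hd₁.le
    linarith
  set K := log (stdTNormConst d₁) - log (stdTNormConst d₂) - (d₁ + 1) / 2 * log (d₂ / d₁)
  refine tendsto_atTop_mono' atTop
    (f₁ := fun u => K + (d₂ - d₁) / 2 * log (1 + u / d₂)) ?_ ?_
  · filter_upwards [eventually_ge_atTop 0] with u hu
    have := mul_le_mul_of_nonneg_left (hlog u hu) (show 0 ≤ (d₁ + 1) / 2 by linarith)
    simp only [K, Pi.sub_apply, logStdTPdfOfSq]
    linarith
  · exact tendsto_atTop_add_const_left _ _ <| (tendsto_log_atTop.comp <|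
      tendsto_atTop_add_const_left _ _ <| tendsto_id.atTop_div_const hd₂).const_mul_atTop
        (by linarith)

lemma exists_stdTPdf_crossing (hd₁ : 0 < d₁) (hd : d₁ < d₂) :
    ∃ b, (∀ x ∈ Ioo 0 b, stdTPdf d₁ x < stdTPdf d₂ x) ∧
      ∀ x ∈ Ioi b, stdTPdf d₂ x < stdTPdf d₁ x := by
  have hd₂ : 0 < d₂ := hd₁.trans hd
  obtain ⟨c, hneg, hpos⟩ := exists_crossing_of_antitoneOn_of_strictMonoOn zero_le_one
    (antitoneOn_logStdTPdfOfSq_sub hd₁ hd.le) (strictMonoOn_logStdTPdfOfSq_sub hd₁ hd)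
    ((continuousOn_logStdTPdfOfSq_sub hd₁ hd₂).mono (Ici_subset_Ici.2 zero_le_one))
    (sub_neg.2 (logStdTPdfOfSq_zero_lt hd₁ hd)) (tendsto_logStdTPdfOfSq_sub hd₁ hd)
  refine ⟨√c, fun x hx => ?_, fun x hx => ?_⟩
  · rw [stdTPdf_eq_exp hd₁, stdTPdf_eq_exp hd₂, exp_lt_exp, ← sub_neg]
    exact hneg _ ⟨sq_nonneg x, (lt_sqrt hx.1.le).1 hx.2⟩
  · rw [stdTPdf_eq_exp hd₁, stdTPdf_eq_exp hd₂, exp_lt_exp, ← sub_pos]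
    exact hpos _ ((sqrt_lt' ((sqrt_nonneg c).trans_lt hx)).1 hx)

lemma stdT_Ioi_lt_of_lt (hd₁ : 0 < d₁) (hd : d₁ < d₂) {t : ℝ} (ht : 0 < t) :
    stdT d₂ (Ioi t) < stdT d₁ (Ioi t) := by
  have hd₂ := hd₁.trans hd
  obtain ⟨b, hlt, hgt⟩ := exists_stdTPdf_crossing hd₁ hd
  rw [stdT_apply hd₁ measurableSet_Ioi, stdT_apply hd₂ measurableSet_Ioi,
    ENNReal.ofReal_lt_ofReal_iff (setIntegral_pos_of_forall_pos measurableSet_Ioi (by simp)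
      (integrable_stdTPdf hd₁).integrableOn fun x _ => stdTPdf_pos hd₁ x)]
  exact setIntegral_Ioi_lt_of_crossing (integrable_stdTPdf hd₁).integrableOn
    (integrable_stdTPdf hd₂).integrableOn
    (by rw [setIntegral_Ioi_zero_stdTPdf hd₁, setIntegral_Ioi_zero_stdTPdf hd₂]) hlt hgt ht

end Crossing

/-- For fixed `α ∈ (0,1)`, the upper `α/2` quantile of the standard t-distribution is
strictly decreasing in the degrees of freedom: if `1 ≤ d₁ < d₂` then
`t_{d₂, α/2} < t_{d₁, α/2}`. -/
theorem t_quantile_strict_anti (α : ℝ) (hα : α ∈ Set.Ioo (0 : ℝ) 1)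
    (d₁ d₂ : ℝ) (hd₁ : 1 ≤ d₁) (hd : d₁ < d₂) (t₁ t₂ : ℝ)
    (h₁ : stdT d₁ (Set.Ioi t₁) = ENNReal.ofReal (α / 2))
    (h₂ : stdT d₂ (Set.Ioi t₂) = ENNReal.ofReal (α / 2)) :
    t₂ < t₁ := by
  have hd₁pos : 0 < d₁ := by linarith
  have hhalf : ENNReal.ofReal (α / 2) < ENNReal.ofReal (1 / 2) :=
    (ENNReal.ofReal_lt_ofReal_iff (by norm_num)).2 (by linarith [hα.2])
  have ht₂ : 0 < t₂ := by
    by_contra! h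
    have := measure_mono (μ := stdT d₂) (Ioi_subset_Ioi h)
    rw [stdT_Ioi_zero (by linarith), h₂] at this
    exact hhalf.not_ge this
  by_contra! h
  have := measure_mono (μ := stdT d₁) (Ioi_subset_Ioi h)
  rw [h₁, ← h₂] at this
  exact (stdT_Ioi_lt_of_lt hd₁pos hd ht₂).not_ge this
end

section
/- In the heteroscedastic mixed model Y_ij = μ_j + b_i + ε_ij with ε_ij independent N(0, σ_j²), under the prior π(μ, σ₁²,…,σ_C²) ∝ ∏_j σ_j^{−2} and conditioning on b̂_i = M_i· − M, the parameters μ_1, …, μ_C are a posteriori independent, with μ_j | Y, b̂ ~ t_{N−1}(M_·j, ω_j²) where ω_j² = (1/(N(N−1))) Σ_{i=1}^N (Y'_ij − M_·j)² and Y'_ij = Y_ij − M_i· + M. -/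
open Finset MeasureTheory Set

/-!
Integrating out `σ_j²` leaves the kernel `(Σ_i (Y_ij − μ_j − b̂_i)²)^(−N/2)` for each `j`.
Since `Y_ij − b̂_i = Y'_ij` and `Y'` has the same column means as `Y`, that sum of squares splits
as `S_j + N (M_·j − μ_j)²` with `S_j = Σ_i (Y'_ij − M_·j)² = N (N − 1) ω_j²`, so each factor is
`S_j^(−N/2)` times a `t_{N−1}(M_·j, ω_j²)` kernel in `μ_j`. Each such kernel decays like
`|μ_j|^(−N)` with `N ≥ 2`, hence is integrable, and so is their product over the coordinates.
-/

/-- Subject mean `M_i·`. -/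
noncomputable def subjMean (N C : ℕ) (Y : Fin N → Fin C → ℝ) (i : Fin N) : ℝ :=
  (∑ j, Y i j) / C

/-- Condition mean `M_·j`. -/
noncomputable def condMean (N C : ℕ) (Y : Fin N → Fin C → ℝ) (j : Fin C) : ℝ :=
  (∑ i, Y i j) / N

/-- Grand mean `M`. -/
noncomputable def grandMean (N C : ℕ) (Y : Fin N → Fin C → ℝ) : ℝ :=
  (∑ i, ∑ j, Y i j) / (N * C)

/-- Plug-in random-effect estimate `b̂_i = M_i· − M`. -/
noncomputable def bhat (N C : ℕ) (Y : Fin N → Fin C → ℝ) (i : Fin N) : ℝ :=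
  subjMean N C Y i - grandMean N C Y

/-- Standardized score `Y'_ij = Y_ij − M_i· + M`. -/
noncomputable def stdScore (N C : ℕ) (Y : Fin N → Fin C → ℝ) (i : Fin N) (j : Fin C) : ℝ :=
  Y i j - subjMean N C Y i + grandMean N C Y

theorem integrable_one_add_sq_div_rpow {a r : ℝ} (ha : 0 < a) (hr : 1 < r) (m : ℝ) :
    Integrable fun t : ℝ => (1 + (t - m) ^ 2 / a) ^ (-r / 2) := by
  have hbracket : Integrable fun t : ℝ => ((1 : ℝ) + ‖t‖ ^ 2) ^ (-r / 2) :=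
    integrable_rpow_neg_one_add_norm_sq (by simpa using hr)
  have hscaled := hbracket.comp_mul_left' (inv_ne_zero (Real.sqrt_pos.2 ha).ne')
  refine (hscaled.comp_sub_right m).congr (Filter.Eventually.of_forall fun t => ?_)
  simp only [Real.norm_eq_abs, sq_abs, mul_pow, inv_pow, Real.sq_sqrt ha.le]
  ring_nf

theorem sum_sq_sub_eq_sum_sq_sub_mean_add {ι : Type*} (s : Finset ι) (x : ι → ℝ) (t : ℝ) :
    ∑ i ∈ s, (x i - t) ^ 2 =
      ∑ i ∈ s, (x i - (∑ i ∈ s, x i) / #s) ^ 2 + #s * ((∑ i ∈ s, x i) / #s - t) ^ 2 := by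
  set m := (∑ i ∈ s, x i) / #s
  have hdev : ∑ i ∈ s, (x i - m) = 0 := by
    rcases s.eq_empty_or_nonempty with rfl | hs
    · simp
    rw [sum_sub_distrib, sum_const, nsmul_eq_mul, mul_div_cancel₀ _ (by positivity), sub_self]
  have hexpand : ∀ i, (x i - t) ^ 2 = (x i - m) ^ 2 + ((m - t) ^ 2 + 2 * (m - t) * (x i - m)) :=
    fun i => by ring
  simp only [hexpand, sum_add_distrib, sum_const, nsmul_eq_mul, ← mul_sum, hdev, mul_zero,
    add_zero]

theorem add_mul_rpow_eq_rpow_mul_one_add_div {S n x : ℝ} (hS : 0 < S) (hn : 0 < n) (hx : 0 ≤ x)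
    (p : ℝ) : (S + n * x) ^ p = S ^ p * (1 + x / (S / n)) ^ p := by
  rw [← Real.mul_rpow hS.le (by positivity)]
  congr 1
  field_simp

theorem sum_subjMean (N C : ℕ) (Y : Fin N → Fin C → ℝ) :
    ∑ i, subjMean N C Y i = N * grandMean N C Y := by
  rcases N.eq_zero_or_pos with rfl | hN
  · simp
  simp only [subjMean, grandMean, ← sum_div]
  field_simp

theorem sum_stdScore (N C : ℕ) (Y : Fin N → Fin C → ℝ) (j : Fin C) :
    ∑ i, stdScore N C Y i j = ∑ i, Y i j := by
  simp only [stdScore, sum_add_distrib, sum_sub_distrib, sum_subjMean, sum_const, card_univ,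
    Fintype.card_fin, nsmul_eq_mul]
  ring

theorem sum_sq_sub_bhat_eq (N C : ℕ) (Y : Fin N → Fin C → ℝ) (j : Fin C) (t : ℝ) :
    ∑ i, (Y i j - t - bhat N C Y i) ^ 2 =
      ∑ i, (stdScore N C Y i j - condMean N C Y j) ^ 2 + N * (condMean N C Y j - t) ^ 2 := by
  have hresidual : ∀ i, Y i j - t - bhat N C Y i = stdScore N C Y i j - t := fun i => by
    simp only [bhat, stdScore]; ring
  simp only [hresidual]
  have hdecomp := sum_sq_sub_eq_sum_sq_sub_mean_add univ (fun i => stdScore N C Y i j) t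
  rwa [card_univ, Fintype.card_fin, sum_stdScore] at hdecomp

/-- `g` is the posterior kernel of `μ` given `Y` and `b̂` once each `σ_j²` has been integrated
out against the prior. -/
theorem heteroscedastic_posterior_general (N C : ℕ) (hN : 2 ≤ N)
    (Y : Fin N → Fin C → ℝ)
    (hpos : ∀ j, 0 < ∑ i, (stdScore N C Y i j - condMean N C Y j) ^ 2) :
    let g : (Fin C → ℝ) → ℝ := fun μ =>
      ∏ j, (∑ i, (Y i j - μ j - bhat N C Y i) ^ 2) ^ (-(N : ℝ) / 2)
    let ω2 : Fin C → ℝ := fun j =>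
      (1 / ((N : ℝ) * ((N : ℝ) - 1))) * ∑ i, (stdScore N C Y i j - condMean N C Y j) ^ 2
    Integrable g (volume : Measure (Fin C → ℝ)) ∧
      ∃ c > 0, ∀ μ : Fin C → ℝ,
        g μ = c * ∏ j, (1 + (μ j - condMean N C Y j) ^ 2 / (((N : ℝ) - 1) * ω2 j))
            ^ (-(N : ℝ) / 2) := by
  intro g ω2
  set S : Fin C → ℝ := fun j => ∑ i, (stdScore N C Y i j - condMean N C Y j) ^ 2
  have hN2 : (2 : ℝ) ≤ N := by exact_mod_cast hN
  have hscale : ∀ j, ((N : ℝ) - 1) * ω2 j = S j / N := fun j => by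
    show ((N : ℝ) - 1) * (1 / (N * (N - 1)) * S j) = S j / N
    field_simp [show (N : ℝ) - 1 ≠ 0 by linarith]
  have hfactor : ∀ μ, g μ = (∏ j, S j ^ (-(N : ℝ) / 2)) *
      ∏ j, (1 + (μ j - condMean N C Y j) ^ 2 / (((N : ℝ) - 1) * ω2 j)) ^ (-(N : ℝ) / 2) := by
    intro μ
    rw [← prod_mul_distrib]
    refine prod_congr rfl fun j _ => ?_
    rw [sum_sq_sub_bhat_eq, hscale, ← neg_sub (μ j), neg_sq]
    exact add_mul_rpow_eq_rpow_mul_one_add_div (hpos j) (by linarith) (sq_nonneg _) _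
  refine ⟨?_, _, prod_pos fun j _ => Real.rpow_pos_of_pos (hpos j) _, hfactor⟩
  rw [show g = _ from funext hfactor]
  refine (Integrable.fintype_prod (f := fun j t =>
    (1 + (t - condMean N C Y j) ^ 2 / (((N : ℝ) - 1) * ω2 j)) ^ (-(N : ℝ) / 2))
      fun j => ?_).const_mul _
  rw [hscale]
  exact integrable_one_add_sq_div_rpow (div_pos (hpos j) (by linarith)) (by linarith) _

/-- In the heteroscedastic mixed model under the prior `π(μ, σ₁²,…,σ_C²) ∝ ∏_j σ_j^{−2}`,
conditioning on `b̂_i = M_i· − M` and integrating out each `σ_j²` gives the conditional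
posterior kernel `g(μ) = ∏_j (Σ_i (Y_ij − μ_j − b̂_i)²)^(−N/2)`. This kernel is
integrable (a proper posterior) and factorizes into a product of univariate
`t_{N−1}(M_·j, ω_j²)` densities, so that a posteriori `μ_1, …, μ_C` are independent
with `μ_j | Y, b̂ ~ t_{N−1}(M_·j, ω_j²)`, where
`ω_j² = (1/(N(N−1))) Σ_i (Y'_ij − M_·j)²`. -/
theorem heteroscedastic_posterior (N C : ℕ) (hN : 2 ≤ N) (hC : 1 ≤ C)
    (Y : Fin N → Fin C → ℝ)
    (hpos : ∀ j, 0 < ∑ i, (stdScore N C Y i j - condMean N C Y j) ^ 2) :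
    let g : (Fin C → ℝ) → ℝ := fun μ =>
      ∏ j, (∑ i, (Y i j - μ j - bhat N C Y i) ^ 2) ^ (-(N : ℝ) / 2)
    let ω2 : Fin C → ℝ := fun j =>
      (1 / ((N : ℝ) * ((N : ℝ) - 1))) * ∑ i, (stdScore N C Y i j - condMean N C Y j) ^ 2
    Integrable g (volume : Measure (Fin C → ℝ)) ∧
      ∃ c > 0, ∀ μ : Fin C → ℝ,
        g μ = c * ∏ j, (1 + (μ j - condMean N C Y j) ^ 2 / (((N : ℝ) - 1) * ω2 j))
            ^ (-(N : ℝ) / 2) :=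
  heteroscedastic_posterior_general N C hN Y hpos
end
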